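/- arXiv:1511.02692 — 2 statements merged into one kernel-verified Lean document; each statement's English description precedes it below -/
import Mathlib

section
/- For 2 ≤ i ≤ n, the number of antichains of size i in [2n+1] × K_n equals C(2n, i-2)C(2n+1, i-1) + C(2n, i)C(2n+1, i) + 2·C(2n+1, i-1)C(2n+1, i). -/
/-- The poset `K_n = [n] ⊕ ([1] ⊔ [1]) ⊕ [n]`. -/
abbrev K (n : ℕ) : Type := Fin n ⊕ₗ ((Fin 1 ⊕ Fin 1) ⊕ₗ Fin n)

instance (n : ℕ) : Fintype (K n) :=
  inferInstanceAs (Fintype (Fin n ⊕ ((Fin 1 ⊕ Fin 1) ⊕ Fin n)))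

instance (n : ℕ) : DecidableEq (K n) :=
  inferInstanceAs (DecidableEq (Fin n ⊕ ((Fin 1 ⊕ Fin 1) ⊕ Fin n)))

/-!
For chains `α` and `β`, an antichain of `α × β` is determined by its sets of first and second
coordinates, which have the same size: the `k`-th smallest first coordinate is paired with the
`k`-th largest second coordinate. Hence `α × β` has `C(|α|, i) · C(|β|, i)` antichains of size `i`,
and a condition on the set of second coordinates only restricts the second factor.

Ordering the two middle elements `x`, `y` of `K_n` as `x < y` turns it into a chain `L` with
`2n + 2` elements, and an antichain of `α × K_n` stays an antichain of `α × L` unless `x` occurs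
in a row weakly below a row containing `y`. So the antichains of size `i` split into those in
which `x` does not weakly precede `y` (`C(m, i) C(2n+2, i)` of them, `m = |α|`), those in which
only `x` precedes `y` (by the symmetry exchanging `x` and `y`, these are the antichains of
`α × L` containing both `x` and `y`: `C(m, i) C(2n, i-2)`), and those with `x` and `y` in the
same row (deleting `y` leaves an antichain of size `i - 1` containing `x` but not `y`:
`C(m, i-1) C(2n, i-2)`). Pascal's rule turns the sum into the stated formula.
-/

open Finset

namespace Finset

variable {α : Type*} [LinearOrder α] (s : Finset α)

lemma monotone_card_filter_lt : Monotone fun a => #{c ∈ s | c < a} :=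
  fun _ _ hab => card_le_card (monotone_filter_right s fun _ _ h => h.trans_le hab)

lemma strictMonoOn_card_filter_lt : StrictMonoOn (fun a => #{c ∈ s | c < a}) s :=
  fun a ha _ _ hab => card_lt_card <|
    (ssubset_iff_of_subset (monotone_filter_right s fun _ _ h => h.trans hab)).2
      ⟨a, mem_filter.2 ⟨ha, hab⟩, by simp⟩

lemma card_filter_lt_lt_card {a : α} (ha : a ∈ s) : #{c ∈ s | c < a} < #s :=
  card_lt_card (filter_ssubset.2 ⟨a, ha, lt_irrefl a⟩)

lemma surjOn_card_filter_lt : Set.SurjOn (fun a => #{c ∈ s | c < a}) s (range #s) :=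
  surjOn_of_injOn_of_card_le _ (fun _ ha => mem_range.2 (card_filter_lt_lt_card s ha))
    (strictMonoOn_card_filter_lt s).injOn (by simp)

lemma antitone_card_filter_gt : Antitone fun a => #{c ∈ s | a < c} :=
  fun _ _ hab => monotone_card_filter_lt (α := αᵒᵈ) s hab

lemma strictAntiOn_card_filter_gt : StrictAntiOn (fun a => #{c ∈ s | a < c}) s :=
  fun _ ha _ hb hab => strictMonoOn_card_filter_lt (α := αᵒᵈ) s hb ha hab

lemma card_filter_gt_lt_card {a : α} (ha : a ∈ s) : #{c ∈ s | a < c} < #s :=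
  card_filter_lt_lt_card (α := αᵒᵈ) s ha

lemma surjOn_card_filter_gt : Set.SurjOn (fun a => #{c ∈ s | a < c}) s (range #s) :=
  surjOn_card_filter_lt (α := αᵒᵈ) s

end Finset

section AntichainProd

variable {α β : Type*}

lemma IsAntichain.eq_of_snd_eq [LinearOrder α] [Preorder β] {A : Set (α × β)}
    (hA : IsAntichain (· ≤ ·) A) {z w : α × β} (hz : z ∈ A) (hw : w ∈ A) (h : z.2 = w.2) :
    z = w := by
  by_contra hne
  rcases le_total z.1 w.1 with h₁ | h₁
  · exact hA hz hw hne ⟨h₁, h.le⟩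
  · exact hA hw hz (Ne.symm hne) ⟨h₁, h.ge⟩

lemma IsAntichain.eq_of_fst_eq [Preorder α] [LinearOrder β] {A : Set (α × β)}
    (hA : IsAntichain (· ≤ ·) A) {z w : α × β} (hz : z ∈ A) (hw : w ∈ A) (h : z.1 = w.1) :
    z = w := by
  by_contra hne
  rcases le_total z.2 w.2 with h₂ | h₂
  · exact hA hz hw hne ⟨h.le, h₂⟩
  · exact hA hw hz (Ne.symm hne) ⟨h.ge, h₂⟩

lemma IsAntichain.filter_snd_eq [LinearOrder α] [Preorder β] [DecidableEq β]
    {A : Finset (α × β)} {a : α} {u : β} (hA : IsAntichain (· ≤ ·) (A : Set (α × β)))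
    (h : (a, u) ∈ A) :
    {z ∈ A | z.2 = u} = {(a, u)} := by
  ext z
  simp only [mem_filter, mem_singleton]
  exact ⟨fun hz => hA.eq_of_snd_eq hz.1 h hz.2, by rintro rfl; exact ⟨h, rfl⟩⟩

lemma IsAntichain.insert_filter_snd_ne [LinearOrder α] [Preorder β] [DecidableEq β]
    {A : Finset (α × β)} {a : α} {u : β} (hA : IsAntichain (· ≤ ·) (A : Set (α × β)))
    (h : (a, u) ∈ A) :
    insert (a, u) {z ∈ A | z.2 ≠ u} = A := by
  rw [insert_eq, ← hA.filter_snd_eq h, filter_union_filter_not_eq]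

variable [LinearOrder α] [LinearOrder β]

lemma IsAntichain.fst_lt_iff_snd_gt {A : Set (α × β)} (hA : IsAntichain (· ≤ ·) A)
    {z w : α × β} (hz : z ∈ A) (hw : w ∈ A) : z.1 < w.1 ↔ w.2 < z.2 := by
  constructor
  · intro h
    by_contra! h'
    exact hA hz hw (ne_of_apply_ne Prod.fst h.ne) ⟨h.le, h'⟩
  · intro h
    by_contra! h'
    exact hA hw hz (ne_of_apply_ne Prod.snd h.ne) ⟨h', h.le⟩

variable {A : Finset (α × β)}

lemma IsAntichain.card_image_fst (hA : IsAntichain (· ≤ ·) (A : Set (α × β))) :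
    #(A.image Prod.fst) = #A :=
  card_image_of_injOn fun _ hz _ hw => hA.eq_of_fst_eq hz hw

lemma IsAntichain.card_image_snd (hA : IsAntichain (· ≤ ·) (A : Set (α × β))) :
    #(A.image Prod.snd) = #A :=
  card_image_of_injOn fun _ hz _ hw => hA.eq_of_snd_eq hz hw

lemma IsAntichain.card_filter_image_fst_lt (hA : IsAntichain (· ≤ ·) (A : Set (α × β)))
    {z : α × β} (hz : z ∈ A) :
    #{a ∈ A.image Prod.fst | a < z.1} = #{b ∈ A.image Prod.snd | z.2 < b} := by
  rw [filter_image, filter_image,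
    card_image_of_injOn fun _ hv _ hw => hA.eq_of_fst_eq (mem_filter.1 hv).1 (mem_filter.1 hw).1,
    card_image_of_injOn fun _ hv _ hw => hA.eq_of_snd_eq (mem_filter.1 hv).1 (mem_filter.1 hw).1]
  exact congrArg card (filter_congr fun w hw => hA.fst_lt_iff_snd_gt hw hz)

/-- When `#W = #U`, the antichain pairing the `k`-th smallest element of `W` with the `k`-th
largest element of `U`. -/
def Finset.antichainOfProj (W : Finset α) (U : Finset β) : Finset (α × β) :=
  {p ∈ W ×ˢ U | #{c ∈ W | c < p.1} = #{c ∈ U | p.2 < c}}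

lemma IsAntichain.eq_antichainOfProj (hA : IsAntichain (· ≤ ·) (A : Set (α × β))) :
    A = antichainOfProj (A.image Prod.fst) (A.image Prod.snd) := by
  ext p
  simp only [antichainOfProj, mem_filter, mem_product]
  constructor
  · intro hp
    exact ⟨⟨mem_image_of_mem _ hp, mem_image_of_mem _ hp⟩, hA.card_filter_image_fst_lt hp⟩
  · rintro ⟨⟨hp₁, hp₂⟩, hrank⟩
    obtain ⟨z, hz, hz₁⟩ := mem_image.1 hp₁
    have hz₂ : z.2 = p.2 :=
      (strictAntiOn_card_filter_gt _).injOn (mem_image_of_mem _ hz) hp₂ <| by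
        simp only [← hA.card_filter_image_fst_lt hz, hz₁, hrank]
    rwa [← Prod.ext hz₁ hz₂]

lemma isAntichain_antichainOfProj (W : Finset α) (U : Finset β) :
    IsAntichain (· ≤ ·) (antichainOfProj W U : Set (α × β)) := by
  intro p hp q hq hne hle
  simp only [antichainOfProj, coe_filter, mem_product, Set.mem_ofPred_eq] at hp hq
  have h₁ : #{c ∈ W | c < p.1} ≤ #{c ∈ W | c < q.1} := monotone_card_filter_lt W hle.1
  have h₂ : #{c ∈ U | q.2 < c} ≤ #{c ∈ U | p.2 < c} := antitone_card_filter_gt U hle.2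
  exact hne <| Prod.ext
    ((strictMonoOn_card_filter_lt W).injOn hp.1.1 hq.1.1 (by omega))
    ((strictAntiOn_card_filter_gt U).injOn hp.1.2 hq.1.2 (by omega))

lemma image_fst_antichainOfProj {W : Finset α} {U : Finset β} (h : #W = #U) :
    (antichainOfProj W U).image Prod.fst = W := by
  refine (image_subset_iff.2 fun p hp => (mem_product.1 (mem_filter.1 hp).1).1).antisymm
    fun a ha => ?_
  obtain ⟨b, hb, hab⟩ := surjOn_card_filter_gt U (mem_range.2 (h ▸ card_filter_lt_lt_card W ha))
  exact mem_image.2 ⟨(a, b), mem_filter.2 ⟨mem_product.2 ⟨ha, hb⟩, hab.symm⟩, rfl⟩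

lemma image_snd_antichainOfProj {W : Finset α} {U : Finset β} (h : #W = #U) :
    (antichainOfProj W U).image Prod.snd = U := by
  refine (image_subset_iff.2 fun p hp => (mem_product.1 (mem_filter.1 hp).1).2).antisymm
    fun b hb => ?_
  obtain ⟨a, ha, hab⟩ := surjOn_card_filter_lt W (mem_range.2 (h ▸ card_filter_gt_lt_card U hb))
  exact mem_image.2 ⟨(a, b), mem_filter.2 ⟨mem_product.2 ⟨ha, hb⟩, hab⟩, rfl⟩

open Classical in
theorem card_antichains_prod [Fintype α] [Fintype β] (P : Finset β → Prop) (i : ℕ) :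
    #{A : Finset (α × β) | IsAntichain (· ≤ ·) (A : Set (α × β)) ∧ #A = i ∧
        P (A.image Prod.snd)} =
      (Fintype.card α).choose i * #{U : Finset β | #U = i ∧ P U} := by
  rw [← card_univ, ← card_powersetCard, ← card_product]
  refine card_nbij' (fun A => (A.image Prod.fst, A.image Prod.snd))
    (fun p => antichainOfProj p.1 p.2) ?_ ?_ ?_ ?_
  · intro A hA
    simp only [coe_filter, mem_univ, true_and, Set.mem_ofPred_eq] at hA
    obtain ⟨hA, rfl, hP⟩ := hA
    simp [hA.card_image_fst, hA.card_image_snd, hP]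
  · rintro ⟨W, U⟩ hWU
    simp only [coe_product, coe_filter, mem_coe, mem_powersetCard, mem_univ, true_and,
      subset_univ, Set.mem_prod, Set.mem_ofPred_eq] at hWU ⊢
    obtain ⟨hW, hU, hP⟩ := hWU
    have hA := isAntichain_antichainOfProj W U
    refine ⟨hA, ?_, by rwa [image_snd_antichainOfProj (hW.trans hU.symm)]⟩
    rw [← hA.card_image_fst, image_fst_antichainOfProj (hW.trans hU.symm), hW]
  · intro A hA
    simp only [coe_filter, mem_univ, true_and, Set.mem_ofPred_eq] at hA
    exact hA.1.eq_antichainOfProj.symm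
  · rintro ⟨W, U⟩ hWU
    simp only [coe_product, coe_filter, mem_coe, mem_powersetCard, mem_univ, true_and,
      subset_univ, Set.mem_prod, Set.mem_ofPred_eq] at hWU
    simp [image_fst_antichainOfProj (hWU.1.trans hWU.2.1.symm),
      image_snd_antichainOfProj (hWU.1.trans hWU.2.1.symm)]

end AntichainProd

section SubsetCount

variable {β : Type*} [Fintype β] [DecidableEq β]

lemma card_filter_subset_disjoint (S T : Finset β) (hST : Disjoint S T) (k : ℕ) :
    #{U : Finset β | #U = #S + k ∧ S ⊆ U ∧ Disjoint U T} =
      (Fintype.card β - #S - #T).choose k := by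
  rw [Nat.sub_sub, ← card_union_of_disjoint hST, ← card_compl, ← card_powersetCard]
  refine card_nbij' (· \ S) (· ∪ S) ?_ ?_ ?_ ?_
  · intro U hU
    simp only [coe_filter, mem_univ, true_and, Set.mem_ofPred_eq] at hU
    obtain ⟨hcard, hSU, hUT⟩ := hU
    simp only [mem_coe, mem_powersetCard, card_sdiff_of_subset hSU, hcard]
    refine ⟨fun a ha => ?_, by omega⟩
    simp only [mem_sdiff] at ha
    simp [ha.2, disjoint_left.1 hUT ha.1]
  · intro V hV
    simp only [mem_coe, mem_powersetCard, subset_compl_iff_disjoint_right,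
      disjoint_union_right] at hV
    obtain ⟨⟨hVS, hVT⟩, hcard⟩ := hV
    simp only [coe_filter, mem_univ, true_and, Set.mem_ofPred_eq, card_union_of_disjoint hVS,
      hcard, subset_union_right, disjoint_union_left, hVT, hST, add_comm, and_self]
  · intro U hU
    simp only [coe_filter, mem_univ, true_and, Set.mem_ofPred_eq] at hU
    exact sdiff_union_of_subset hU.2.1
  · intro V hV
    simp only [mem_coe, mem_powersetCard, subset_compl_iff_disjoint_right,
      disjoint_union_right] at hV
    exact union_sdiff_cancel_right hV.1.1

end SubsetCount

section MapSnd

variable {α β γ : Type*}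

def Finset.mapSnd (e : β ≃ γ) : Finset (α × β) ≃ Finset (α × γ) :=
  ((Equiv.refl α).prodCongr e).finsetCongr

lemma Finset.coe_mapSnd (e : β ≃ γ) (A : Finset (α × β)) :
    (mapSnd e A : Set (α × γ)) = Prod.map id e '' A := by
  simp [mapSnd]

lemma Finset.card_mapSnd (e : β ≃ γ) (A : Finset (α × β)) : #(mapSnd e A) = #A :=
  card_map _

lemma Finset.image_snd_mapSnd [DecidableEq β] [DecidableEq γ] (e : β ≃ γ) (A : Finset (α × β)) :
    (mapSnd e A).image Prod.snd = (A.image Prod.snd).map e.toEmbedding := by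
  ext c; simp [mapSnd]

lemma Finset.mapSnd_trans {δ : Type*} (e : β ≃ γ) (f : γ ≃ δ) (A : Finset (α × β)) :
    mapSnd (e.trans f) A = mapSnd f (mapSnd e A) := by
  ext ⟨a, d⟩; simp [mapSnd]

lemma Finset.mem_mapSnd (e : β ≃ γ) {A : Finset (α × β)} {a : α} {c : γ} :
    (a, c) ∈ mapSnd e A ↔ (a, e.symm c) ∈ A := by
  simp [mapSnd]

lemma isAntichain_mapSnd_orderIso [Preorder α] [Preorder β] [Preorder γ] (σ : β ≃o γ)
    {A : Finset (α × β)} :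
    IsAntichain (· ≤ ·) (mapSnd σ.toEquiv A : Set (α × γ)) ↔
      IsAntichain (· ≤ ·) (A : Set (α × β)) := by
  let φ : α × β ≃o α × γ :=
    { (Equiv.refl α).prodCongr σ.toEquiv with map_rel_iff' := and_congr_right' σ.le_iff_le }
  rw [coe_mapSnd]
  exact IsAntichain.image_iso_iff (φ := φ)

open Classical in
theorem card_antichains_mapSnd [LinearOrder α] [Fintype α] [Fintype β]
    [DecidableEq β] [LinearOrder γ] [Fintype γ] (e : β ≃ γ) (P : Finset β → Prop) (i : ℕ) :
    #{A : Finset (α × β) | IsAntichain (· ≤ ·) (mapSnd e A : Set (α × γ)) ∧ #A = i ∧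
        P (A.image Prod.snd)} =
      (Fintype.card α).choose i * #{U : Finset β | #U = i ∧ P U} := by
  rw [card_equiv (mapSnd e) (t := {B : Finset (α × γ) | IsAntichain (· ≤ ·) (B : Set (α × γ)) ∧
      #B = i ∧ P ((B.image Prod.snd).map e.symm.toEmbedding)}),
    card_antichains_prod fun U => P (U.map e.symm.toEmbedding)]
  · congr 1
    refine card_equiv e.finsetCongr.symm fun U => ?_
    simp [Equiv.finsetCongr_symm, Equiv.finsetCongr_apply]
  · intro A
    simp [card_mapSnd, image_snd_mapSnd, map_map]

end MapSnd

section WeaklyPrecedes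

variable {α β : Type*}

def WeaklyPrecedes [LE α] (A : Finset (α × β)) (u v : β) : Prop :=
  ∃ a b, a ≤ b ∧ (a, u) ∈ A ∧ (b, v) ∈ A

lemma weaklyPrecedes_mapSnd {γ : Type*} [LE α] (e : β ≃ γ) {A : Finset (α × β)} {u v : γ} :
    WeaklyPrecedes (mapSnd e A) u v ↔ WeaklyPrecedes A (e.symm u) (e.symm v) := by
  simp only [WeaklyPrecedes, mem_mapSnd]

variable [LinearOrder α] {A : Finset (α × β)} {u v : β}

lemma weaklyPrecedes_iff_of_not_weaklyPrecedes [DecidableEq β] (h : ¬WeaklyPrecedes A v u) :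
    WeaklyPrecedes A u v ↔ u ∈ A.image Prod.snd ∧ v ∈ A.image Prod.snd := by
  refine ⟨fun ⟨a, b, _, ha, hb⟩ => ⟨mem_image_of_mem _ ha, mem_image_of_mem _ hb⟩, ?_⟩
  rintro ⟨hu, hv⟩
  obtain ⟨⟨a, _⟩, ha, rfl⟩ := mem_image.1 hu
  obtain ⟨⟨b, _⟩, hb, rfl⟩ := mem_image.1 hv
  rcases le_total a b with hab | hba
  · exact ⟨a, b, hab, ha, hb⟩
  · exact (h ⟨b, a, hba, hb, ha⟩).elim

lemma IsAntichain.exists_of_weaklyPrecedes [Preorder β]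
    (hA : IsAntichain (· ≤ ·) (A : Set (α × β)))
    (huv : WeaklyPrecedes A u v) (hvu : WeaklyPrecedes A v u) :
    ∃ a, (a, u) ∈ A ∧ (a, v) ∈ A := by
  obtain ⟨a, b, hab, hau, hbv⟩ := huv
  obtain ⟨c, d, hcd, hcv, hdu⟩ := hvu
  obtain rfl : d = a := congrArg Prod.fst (hA.eq_of_snd_eq hdu hau rfl)
  obtain rfl : c = b := congrArg Prod.fst (hA.eq_of_snd_eq hcv hbv rfl)
  exact ⟨d, hau, (le_antisymm hab hcd) ▸ hbv⟩

end WeaklyPrecedes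

namespace K

variable {n : ℕ}

def x : K n := toLex (.inr (toLex (.inl (.inl 0))))
def y : K n := toLex (.inr (toLex (.inl (.inr 0))))

lemma elem_cases (u : K n) :
    (∃ j, u = toLex (.inl j)) ∨ u = x ∨ u = y ∨ ∃ j, u = toLex (.inr (toLex (.inr j))) := by
  rcases u with j | ((a | a) | j)
  · exact .inl ⟨j, rfl⟩
  · exact .inr <| .inl <| by rw [Subsingleton.elim a 0]; rfl
  · exact .inr <| .inr <| .inl <| by rw [Subsingleton.elim a 0]; rfl
  · exact .inr <| .inr <| .inr ⟨j, rfl⟩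

lemma card_eq : Fintype.card (K n) = 2 * n + 2 := by
  rw [Fintype.card_congr (ofLex.trans ((Equiv.refl _).sumCongr ofLex))]
  simp
  ring

lemma x_ne_y : (x : K n) ≠ y := by simp [x, y]

lemma not_x_le_y : ¬(x : K n) ≤ y := by simp [x, y]

lemma not_y_le_x : ¬(y : K n) ≤ x := by simp [x, y]

lemma le_y_iff_le_x {u : K n} (hx : u ≠ x) (hy : u ≠ y) : u ≤ y ↔ u ≤ x := by
  rcases elem_cases u with ⟨j, rfl⟩ | rfl | rfl | ⟨j, rfl⟩ <;> simp_all [x, y]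

lemma y_le_iff_x_le {u : K n} (hx : u ≠ x) (hy : u ≠ y) : y ≤ u ↔ x ≤ u := by
  rcases elem_cases u with ⟨j, rfl⟩ | rfl | rfl | ⟨j, rfl⟩ <;> simp_all [x, y]

/-- A linear extension of `K n`: the middle antichain is ordered as `x < y`. -/
abbrev L (n : ℕ) : Type := Fin n ⊕ₗ ((Fin 1 ⊕ₗ Fin 1) ⊕ₗ Fin n)

def toL : K n ≃ L n :=
  ofLex.trans <| ((Equiv.refl _).sumCongr <|
    ofLex.trans <| (toLex.sumCongr (Equiv.refl _)).trans toLex).trans toLex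

lemma toL_mono : Monotone (toL : K n → L n) := by
  intro u v
  rcases elem_cases u with ⟨j, rfl⟩ | rfl | rfl | ⟨j, rfl⟩ <;>
    rcases elem_cases v with ⟨j', rfl⟩ | rfl | rfl | ⟨j', rfl⟩ <;> simp [toL, x, y]

lemma toL_x_le_toL_y : toL (x : K n) ≤ toL y := by simp [toL, x, y]

lemma le_or_eq_of_toL_le {u v : K n} (h : toL u ≤ toL v) : u ≤ v ∨ u = x ∧ v = y := by
  rcases elem_cases u with ⟨j, rfl⟩ | rfl | rfl | ⟨j, rfl⟩ <;>
    rcases elem_cases v with ⟨j', rfl⟩ | rfl | rfl | ⟨j', rfl⟩ <;> simp_all [toL, x, y]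

def swap : K n ≃o K n :=
  .sumLexCongr (.refl _) (.sumLexCongr (.sumComm _ _) (.refl _))

lemma swap_symm_x : (swap : K n ≃o K n).toEquiv.symm x = y := rfl

lemma swap_symm_y : (swap : K n ≃o K n).toEquiv.symm y = x := rfl

section Antichains

variable {α : Type*} [LinearOrder α]

lemma isAntichain_mapSnd_toL_iff {A : Finset (α × K n)} :
    IsAntichain (· ≤ ·) (mapSnd toL A : Set (α × L n)) ↔
      IsAntichain (· ≤ ·) (A : Set (α × K n)) ∧ ¬WeaklyPrecedes A x y := by
  rw [coe_mapSnd]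
  constructor
  · intro h
    refine ⟨fun z hz w hw hne hle =>
      h ⟨z, hz, rfl⟩ ⟨w, hw, rfl⟩ ?_ ⟨hle.1, toL_mono hle.2⟩, ?_⟩
    · exact fun heq => hne (((Equiv.refl α).prodCongr toL).injective heq)
    · rintro ⟨a, b, hab, ha, hb⟩
      exact h ⟨_, ha, rfl⟩ ⟨_, hb, rfl⟩ (by simp [x_ne_y]) ⟨hab, toL_x_le_toL_y⟩
  · rintro ⟨hA, hP⟩ _ ⟨⟨a, u⟩, hz, rfl⟩ _ ⟨⟨b, v⟩, hw, rfl⟩ hne ⟨h₁, h₂⟩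
    rcases le_or_eq_of_toL_le h₂ with h | ⟨rfl, rfl⟩
    · exact hA hz hw (fun heq => hne (heq ▸ rfl)) ⟨h₁, h⟩
    · exact hP ⟨a, b, h₁, hz, hw⟩

lemma isAntichain_mapSnd_swap_toL_iff {A : Finset (α × K n)} :
    IsAntichain (· ≤ ·) (mapSnd (swap.toEquiv.trans toL) A : Set (α × L n)) ↔
      IsAntichain (· ≤ ·) (A : Set (α × K n)) ∧ ¬WeaklyPrecedes A y x := by
  rw [mapSnd_trans, isAntichain_mapSnd_toL_iff, isAntichain_mapSnd_orderIso,
    weaklyPrecedes_mapSnd, swap_symm_x, swap_symm_y]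

def addY (F : Finset (α × K n)) : Finset (α × K n) :=
  F ∪ {z ∈ F | z.2 = x}.image fun z => (z.1, y)

lemma addY_eq_insert {F : Finset (α × K n)} {a : α}
    (hF : IsAntichain (· ≤ ·) (F : Set (α × K n))) (hax : (a, x) ∈ F) :
    addY F = insert (a, y) F := by
  rw [addY, hF.filter_snd_eq hax, image_singleton, union_comm, ← insert_eq]

lemma isAntichain_insert_y {F : Finset (α × K n)} {a : α}
    (hF : IsAntichain (· ≤ ·) (F : Set (α × K n))) (hax : (a, x) ∈ F)
    (hy : y ∉ F.image Prod.snd) :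
    IsAntichain (· ≤ ·) (insert (a, y) F : Set (α × K n)) := by
  have hsnd : ∀ ⦃b : α⦄ ⦃u : K n⦄, (b, u) ∈ F → u ≠ y := fun b u hb hu =>
    hy (mem_image.2 ⟨(b, u), hb, hu⟩)
  refine hF.insert (fun ⟨b, u⟩ hb _ ⟨h₁, h₂⟩ => ?_) (fun ⟨b, u⟩ hb _ ⟨h₁, h₂⟩ => ?_)
  all_goals
    by_cases hux : u = x
    · subst hux
      obtain rfl : b = a := congrArg Prod.fst (hF.eq_of_snd_eq hb hax rfl)
      simp_all [not_x_le_y, not_y_le_x]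
  · exact hF hb hax (by simp [hux]) ⟨h₁, (le_y_iff_le_x hux (hsnd hb)).1 h₂⟩
  · exact hF hax hb (by simp [Ne.symm hux]) ⟨h₁, (y_le_iff_x_le hux (hsnd hb)).1 h₂⟩

variable [Fintype α]

open Classical in
lemma card_antichains_not_weaklyPrecedes (i : ℕ) :
    #{A : Finset (α × K n) | IsAntichain (· ≤ ·) (A : Set (α × K n)) ∧ #A = i ∧
        ¬WeaklyPrecedes A x y} = (Fintype.card α).choose i * (2 * n + 2).choose i := by
  calc _ = #{A : Finset (α × K n) | IsAntichain (· ≤ ·) (mapSnd toL A : Set (α × L n)) ∧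
          #A = i ∧ True} := by
        congr 1; ext A
        simp only [mem_filter, mem_univ, true_and, isAntichain_mapSnd_toL_iff, and_true]
        tauto
    _ = (Fintype.card α).choose i * #{U : Finset (K n) | #U = i ∧ True} := by
        convert card_antichains_mapSnd (α := α) toL (fun _ => True) i
    _ = _ := by simp [card_eq]

open Classical in
lemma card_antichains_weaklyPrecedes_not (k : ℕ) :
    #{A : Finset (α × K n) | IsAntichain (· ≤ ·) (A : Set (α × K n)) ∧ #A = k + 2 ∧
        WeaklyPrecedes A x y ∧ ¬WeaklyPrecedes A y x} =
      (Fintype.card α).choose (k + 2) * (2 * n).choose k := by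
  calc _ = #{A : Finset (α × K n) |
          IsAntichain (· ≤ ·) (mapSnd (swap.toEquiv.trans toL) A : Set (α × L n)) ∧
          #A = k + 2 ∧ (x ∈ A.image Prod.snd ∧ y ∈ A.image Prod.snd)} := by
        congr 1; ext A
        simp only [mem_filter, mem_univ, true_and, isAntichain_mapSnd_swap_toL_iff]
        constructor
        · rintro ⟨hA, hcard, hxy, hyx⟩
          exact ⟨⟨hA, hyx⟩, hcard, (weaklyPrecedes_iff_of_not_weaklyPrecedes hyx).1 hxy⟩
        · rintro ⟨⟨hA, hyx⟩, hcard, hmem⟩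
          exact ⟨hA, hcard, (weaklyPrecedes_iff_of_not_weaklyPrecedes hyx).2 hmem, hyx⟩
    _ = (Fintype.card α).choose (k + 2) *
          #{U : Finset (K n) | #U = k + 2 ∧ (x ∈ U ∧ y ∈ U)} := by
        convert card_antichains_mapSnd (α := α) (swap.toEquiv.trans toL)
          (fun U => x ∈ U ∧ y ∈ U) (k + 2)
    _ = _ := by
        have := card_filter_subset_disjoint (β := K n) {x, y} ∅ (disjoint_empty_right _) k
        rw [card_pair x_ne_y, card_empty, card_eq] at this
        convert congrArg ((Fintype.card α).choose (k + 2) * ·) this using 3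
        · ext U; simp [insert_subset_iff, add_comm]
        · omega

open Classical in
lemma card_antichains_weaklyPrecedes_both_eq (k : ℕ) :
    #{A : Finset (α × K n) | IsAntichain (· ≤ ·) (A : Set (α × K n)) ∧ #A = k + 2 ∧
        WeaklyPrecedes A x y ∧ WeaklyPrecedes A y x} =
      #{F : Finset (α × K n) | IsAntichain (· ≤ ·) (F : Set (α × K n)) ∧ #F = k + 1 ∧
        (x ∈ F.image Prod.snd ∧ y ∉ F.image Prod.snd)} := by
  refine card_nbij' (fun A => {z ∈ A | z.2 ≠ y}) addY ?_ ?_ ?_ ?_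
  · intro A hA
    simp only [coe_filter, mem_univ, true_and, Set.mem_ofPred_eq] at hA ⊢
    obtain ⟨hA, hcard, hxy, hyx⟩ := hA
    obtain ⟨a, hax, hay⟩ := hA.exists_of_weaklyPrecedes hxy hyx
    have := card_insert_of_notMem (s := {z ∈ A | z.2 ≠ y}) (a := (a, y)) (by simp)
    rw [hA.insert_filter_snd_ne hay] at this
    exact ⟨hA.subset fun _ hz => hz.1, by omega,
      mem_image.2 ⟨(a, x), by simp [hax, x_ne_y], rfl⟩, by simp⟩
  · intro F hF
    simp only [coe_filter, mem_univ, true_and, Set.mem_ofPred_eq] at hF ⊢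
    obtain ⟨hF, hcard, hx, hy⟩ := hF
    obtain ⟨⟨a, _⟩, hax, rfl⟩ := mem_image.1 hx
    rw [addY_eq_insert hF hax, coe_insert,
      card_insert_of_notMem fun h => hy (mem_image_of_mem _ h), hcard]
    exact ⟨isAntichain_insert_y hF hax hy, rfl,
      ⟨a, a, le_rfl, mem_insert_of_mem hax, mem_insert_self _ _⟩,
      ⟨a, a, le_rfl, mem_insert_self _ _, mem_insert_of_mem hax⟩⟩
  · intro A hA
    simp only [coe_filter, mem_univ, true_and, Set.mem_ofPred_eq] at hA
    obtain ⟨hA, -, hxy, hyx⟩ := hA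
    obtain ⟨a, hax, hay⟩ := hA.exists_of_weaklyPrecedes hxy hyx
    rw [addY_eq_insert (a := a) (hA.subset (coe_subset.2 (filter_subset _ _)))
      (by simp [hax, x_ne_y]), hA.insert_filter_snd_ne hay]
  · intro F hF
    simp only [coe_filter, mem_univ, true_and, Set.mem_ofPred_eq] at hF
    obtain ⟨hF, -, hx, hy⟩ := hF
    obtain ⟨⟨a, _⟩, hax, rfl⟩ := mem_image.1 hx
    dsimp only
    rw [addY_eq_insert hF hax, filter_insert, if_neg (by simp)]
    exact filter_true_of_mem fun z hz h => hy (mem_image.2 ⟨z, hz, h⟩)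

open Classical in
lemma card_antichains_weaklyPrecedes_both (k : ℕ) :
    #{A : Finset (α × K n) | IsAntichain (· ≤ ·) (A : Set (α × K n)) ∧ #A = k + 2 ∧
        WeaklyPrecedes A x y ∧ WeaklyPrecedes A y x} =
      (Fintype.card α).choose (k + 1) * (2 * n).choose k := by
  rw [card_antichains_weaklyPrecedes_both_eq]
  calc _ = #{F : Finset (α × K n) | IsAntichain (· ≤ ·) (mapSnd toL F : Set (α × L n)) ∧
          #F = k + 1 ∧ (x ∈ F.image Prod.snd ∧ y ∉ F.image Prod.snd)} := by
        congr 1; ext F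
        simp only [mem_filter, mem_univ, true_and, isAntichain_mapSnd_toL_iff]
        constructor
        · rintro ⟨hF, hcard, hx, hy⟩
          exact ⟨⟨hF, fun ⟨_, b, _, _, hb⟩ => hy (mem_image_of_mem _ hb)⟩, hcard, hx, hy⟩
        · rintro ⟨⟨hF, -⟩, hcard, hx, hy⟩
          exact ⟨hF, hcard, hx, hy⟩
    _ = (Fintype.card α).choose (k + 1) *
          #{U : Finset (K n) | #U = k + 1 ∧ (x ∈ U ∧ y ∉ U)} := by
        convert card_antichains_mapSnd (α := α) toL (fun U => x ∈ U ∧ y ∉ U) (k + 1)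
    _ = _ := by
        have := card_filter_subset_disjoint (β := K n) {x} {y}
          (disjoint_singleton.2 x_ne_y) k
        rw [card_singleton, card_singleton, card_eq] at this
        convert congrArg ((Fintype.card α).choose (k + 1) * ·) this using 3
        · ext U; simp [add_comm]
        · omega

open Classical in
theorem card_antichains_chain_prod (k : ℕ) :
    #{A : Finset (α × K n) | IsAntichain (· ≤ ·) (A : Set (α × K n)) ∧ #A = k + 2} =
      (Fintype.card α).choose (k + 2) * (2 * n + 2).choose (k + 2) +
        (Fintype.card α).choose (k + 2) * (2 * n).choose k +
        (Fintype.card α).choose (k + 1) * (2 * n).choose k := by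
  have h₁ := card_filter_add_card_filter_not (s := {A : Finset (α × K n) |
    IsAntichain (· ≤ ·) (A : Set (α × K n)) ∧ #A = k + 2}) (fun A => WeaklyPrecedes A x y)
  have h₂ := card_filter_add_card_filter_not (s := {A : Finset (α × K n) |
    (IsAntichain (· ≤ ·) (A : Set (α × K n)) ∧ #A = k + 2) ∧ WeaklyPrecedes A x y})
    (fun A => WeaklyPrecedes A y x)
  simp only [filter_filter, and_assoc] at h₁ h₂
  rw [← card_antichains_not_weaklyPrecedes, ← card_antichains_weaklyPrecedes_not,
    ← card_antichains_weaklyPrecedes_both]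
  omega

end Antichains

end K

theorem antichain_count_chain_K_general (n i : ℕ) (h2 : 2 ≤ i) :
    Nat.card {A : Finset (Fin (2 * n + 1) × K n) //
        IsAntichain (· ≤ ·) (A : Set (Fin (2 * n + 1) × K n)) ∧ A.card = i} =
      (2 * n).choose (i - 2) * (2 * n + 1).choose (i - 1) +
        (2 * n).choose i * (2 * n + 1).choose i +
        2 * ((2 * n + 1).choose (i - 1) * (2 * n + 1).choose i) := by
  classical
  obtain ⟨k, rfl⟩ := Nat.exists_eq_add_of_le' h2
  rw [Nat.card_eq_fintype_card, Fintype.card_subtype, K.card_antichains_chain_prod,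
    Fintype.card_fin, show k + 2 - 2 = k by omega, show k + 2 - 1 = k + 1 by omega,
    Nat.choose_succ_succ (2 * n + 1) (k + 1), Nat.choose_succ_succ (2 * n) k,
    Nat.choose_succ_succ (2 * n) (k + 1)]
  ring

/-- For `2 ≤ i ≤ n`, the number of antichains of size `i` in `[2n+1] × K_n` equals
`C(2n,i-2) C(2n+1,i-1) + C(2n,i) C(2n+1,i) + 2 C(2n+1,i-1) C(2n+1,i)`. -/
theorem antichain_count_chain_K (n i : ℕ) (h2 : 2 ≤ i) (hn : i ≤ n) :
    Nat.card {A : Finset (Fin (2 * n + 1) × K n) //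
        IsAntichain (· ≤ ·) (A : Set (Fin (2 * n + 1) × K n)) ∧ A.card = i} =
      (2 * n).choose (i - 2) * (2 * n + 1).choose (i - 1) +
        (2 * n).choose i * (2 * n + 1).choose i +
        2 * ((2 * n + 1).choose (i - 1) * (2 * n + 1).choose i) :=
  antichain_count_chain_K_general n i h2
end

section
/- The antichain polynomial 𝒩_{[m]×K_n}(t) is monic (has leading coefficient 1 in its top degree m+1) if and only if m = 1 or m = 2n+1. -/
/-!
Rank `K_n` by `{0, …, 2n}`: two points of different ranks are comparable, and only the two
middle points share a rank. In an antichain of `[m] × K_n` the points other than the right middle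
point lie in distinct rows, and the right middle point occurs at most once, so the size is at most
`m + 1`. Equality forces one point per row, at strictly decreasing ranks, with the middle rank
among them (its row also holds the right middle point). Hence maximal antichains correspond to
order embeddings `[m] ↪ [2n+1]ᵒᵈ` hitting the middle, i.e. to `m`-subsets of a `(2n+1)`-set
containing a fixed point. For `m ≥ 1` there are `C(2n, m-1)` of these, which is `1` exactly when
`m = 1` or `m = 2n + 1`; for `m = 0` there are none.
-/

open Finset OrderDual

theorem card_powersetCard_mem_eq_one_iff {α : Type*} [Fintype α] (a : α) (m : ℕ) :
    Nat.card {s : Set.powersetCard α m // a ∈ s} = 1 ↔ m = 1 ∨ m = Fintype.card α := by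
  classical
  have e : {s : Set.powersetCard α m // a ∈ s} ≃ ((univ.powersetCard m).filter ({a} ⊆ ·)) :=
    (Equiv.subtypeSubtypeEquivSubtypeInter (· ∈ Set.powersetCard α m) (a ∈ ·)).trans
      (Equiv.subtypeEquivRight fun s => by simp)
  rw [Nat.card_congr e, Nat.card_eq_fintype_card, Fintype.card_coe]
  have hα : 0 < Fintype.card α := Fintype.card_pos_iff.2 ⟨a⟩
  rcases m with _ | k
  · simp [Finset.filter_false_of_mem, hα.ne]
  · rw [card_filter_powersetCard_subset _ _ _ (subset_univ _) (by simp), card_singleton,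
      card_univ, Nat.choose_eq_one_iff]
    omega

theorem card_orderEmbedding_mem_range {I : Type*} [LinearOrder I] (a : I) (m : ℕ) :
    Nat.card {f : Fin m ↪o I // a ∈ Set.range f} =
      Nat.card {s : Set.powersetCard I m // a ∈ s} :=
  Nat.card_congr <| Set.powersetCard.ofFinEmbEquiv.subtypeEquiv fun f =>
    (Set.powersetCard.mem_ofFinEmbEquiv_iff_mem_range f a).symm

section ProdAntichain

variable {α β : Type*} [PartialOrder β] {A : Set (α × β)}

lemma IsAntichain.not_snd_le_of_fst_lt [PartialOrder α] (hA : IsAntichain (· ≤ ·) A)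
    {p q : α × β} (hp : p ∈ A) (hq : q ∈ A) (h : p.1 < q.1) : ¬ p.2 ≤ q.2 := fun h' =>
  h.ne (congrArg Prod.fst (hA.eq hp hq ⟨h.le, h'⟩))

lemma IsAntichain.injOn_fst_of_isChain [PartialOrder α] (hA : IsAntichain (· ≤ ·) A)
    {s : Set β} (hs : IsChain (· ≤ ·) s) : Set.InjOn Prod.fst {p ∈ A | p.2 ∈ s} := by
  rintro p ⟨hp, hps⟩ q ⟨hq, hqs⟩ h
  rcases hs.total hps hqs with hle | hle
  · exact hA.eq hp hq ⟨h.le, hle⟩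
  · exact (hA.eq hq hp ⟨h.ge, hle⟩).symm

lemma IsAntichain.injOn_snd [LinearOrder α] (hA : IsAntichain (· ≤ ·) A) :
    Set.InjOn Prod.snd A := by
  intro p hp q hq h
  rcases le_total p.1 q.1 with hle | hle
  · exact hA.eq hp hq ⟨hle, h.le⟩
  · exact (hA.eq hq hp ⟨hle, h.ge⟩).symm

end ProdAntichain

namespace K

variable {n : ℕ}

instance : DecidableEq (K n) :=
  inferInstanceAs (DecidableEq (Fin n ⊕ ((Fin 1 ⊕ Fin 1) ⊕ Fin n)))

def low (i : Fin n) : K n := toLex (.inl i)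
def midLeft (n : ℕ) : K n := toLex (.inr (toLex (.inl (.inl 0))))
def midRight (n : ℕ) : K n := toLex (.inr (toLex (.inl (.inr 0))))
def high (j : Fin n) : K n := toLex (.inr (toLex (.inr j)))

lemma eq_low_or_mid_or_high (k : K n) :
    (∃ i, k = low i) ∨ k = midLeft n ∨ k = midRight n ∨ ∃ j, k = high j := by
  rcases k with i | ((z | z) | j)
  · exact Or.inl ⟨i, rfl⟩
  · exact Or.inr <| Or.inl <| by rw [Fin.fin_one_eq_zero z]; rfl
  · exact Or.inr <| Or.inr <| Or.inl <| by rw [Fin.fin_one_eq_zero z]; rfl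
  · exact Or.inr <| Or.inr <| Or.inr ⟨j, rfl⟩

def rank : K n → Fin (2 * n + 1)
  | Sum.inl i => ⟨i, by omega⟩
  | Sum.inr (Sum.inl _) => ⟨n, by omega⟩
  | Sum.inr (Sum.inr j) => ⟨n + 1 + j, by omega⟩

@[simp] lemma rank_low (i : Fin n) : rank (low i) = ⟨i, by omega⟩ := rfl
@[simp] lemma rank_midLeft : rank (midLeft n) = ⟨n, by omega⟩ := rfl
@[simp] lemma rank_midRight : rank (midRight n) = ⟨n, by omega⟩ := rfl
@[simp] lemma rank_high (j : Fin n) : rank (high j) = ⟨n + 1 + j, by omega⟩ := rfl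

lemma le_iff_rank_lt_or_eq (k k' : K n) : k ≤ k' ↔ rank k < rank k' ∨ k = k' := by
  rcases eq_low_or_mid_or_high k with ⟨i, rfl⟩ | rfl | rfl | ⟨j, rfl⟩ <;>
  rcases eq_low_or_mid_or_high k' with ⟨i', rfl⟩ | rfl | rfl | ⟨j', rfl⟩ <;>
  simp only [rank_low, rank_midLeft, rank_midRight, rank_high, Fin.mk_lt_mk] <;>
  simp [low, midLeft, midRight, high, Fin.ext_iff] <;> omega

def unrank (j : Fin (2 * n + 1)) : K n :=
  if h : (j : ℕ) < n then low ⟨j, h⟩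
  else if h' : (j : ℕ) = n then midLeft n
  else high ⟨j - (n + 1), by have := j.isLt; omega⟩

@[simp] lemma rank_unrank (j : Fin (2 * n + 1)) : rank (unrank j) = j := by
  unfold unrank
  split_ifs <;> ext <;> simp <;> omega

lemma unrank_ne_midRight (j : Fin (2 * n + 1)) : unrank j ≠ midRight n := by
  unfold unrank
  split_ifs <;> simp [low, midLeft, midRight, high]

lemma unrank_rank {k : K n} (hk : k ≠ midRight n) : unrank (rank k) = k := by
  rcases eq_low_or_mid_or_high k with ⟨i, rfl⟩ | rfl | rfl | ⟨j, rfl⟩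
  · simp [unrank]
  · simp [unrank]
  · exact absurd rfl hk
  · have : ¬ n + 1 + (j : ℕ) < n ∧ n + 1 + (j : ℕ) ≠ n := by omega
    simp [unrank, this]

lemma rank_injOn : Set.InjOn rank {k : K n | k ≠ midRight n} := fun k hk k' hk' h => by
  rw [← unrank_rank hk, h, unrank_rank hk']

lemma isChain_ne_midRight : IsChain (· ≤ ·) {k : K n | k ≠ midRight n} := by
  intro k hk k' hk' hne
  simp only [le_iff_rank_lt_or_eq]
  have : rank k ≠ rank k' := fun h => hne (rank_injOn hk hk' h)
  omega

variable {m : ℕ}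

def rowAntichain (f : Fin m ↪o (Fin (2 * n + 1))ᵒᵈ) : Finset (Fin m × K n) :=
  {p | toDual (rank p.2) = f p.1}

lemma mem_rowAntichain {f : Fin m ↪o (Fin (2 * n + 1))ᵒᵈ} {p : Fin m × K n} :
    p ∈ rowAntichain f ↔ toDual (rank p.2) = f p.1 := by
  simp [rowAntichain]

lemma isAntichain_rowAntichain (f : Fin m ↪o (Fin (2 * n + 1))ᵒᵈ) :
    IsAntichain (· ≤ ·) (rowAntichain f : Set (Fin m × K n)) := by
  rintro ⟨v, k⟩ hp ⟨w, k'⟩ hq hne ⟨hvw, hkk'⟩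
  simp only [mem_coe, mem_rowAntichain] at hp hq
  have hrank : rank k' ≤ rank k := by
    simpa [← hp, ← hq] using f.monotone hvw
  rcases (le_iff_rank_lt_or_eq k k').1 hkk' with hlt | rfl
  · exact hlt.not_ge hrank
  · exact hne (by rw [f.injective (hp.symm.trans hq)])

lemma injOn_fst_filter_ne_midRight {A : Finset (Fin m × K n)}
    (hA : IsAntichain (· ≤ ·) (A : Set (Fin m × K n))) :
    Set.InjOn Prod.fst
      (({p ∈ A | p.2 ≠ midRight n} : Finset (Fin m × K n)) : Set (Fin m × K n)) := by
  rw [coe_filter]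
  exact hA.injOn_fst_of_isChain isChain_ne_midRight

lemma card_filter_ne_midRight_le {A : Finset (Fin m × K n)}
    (hA : IsAntichain (· ≤ ·) (A : Set (Fin m × K n))) :
    #{p ∈ A | p.2 ≠ midRight n} ≤ m := by
  simpa using card_le_card_of_injOn Prod.fst (fun _ _ => mem_univ _)
    (injOn_fst_filter_ne_midRight hA)

lemma card_filter_eq_midRight_le {A : Finset (Fin m × K n)}
    (hA : IsAntichain (· ≤ ·) (A : Set (Fin m × K n))) :
    #{p ∈ A | p.2 = midRight n} ≤ 1 :=
  card_le_one.2 fun p hp q hq => by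
    simp only [mem_filter] at hp hq
    exact hA.injOn_snd hp.1 hq.1 (hp.2.trans hq.2.symm)

lemma card_le_of_isAntichain {A : Finset (Fin m × K n)}
    (hA : IsAntichain (· ≤ ·) (A : Set (Fin m × K n))) : #A ≤ m + 1 := by
  rw [← card_filter_add_card_filter_not (s := A) (·.2 = midRight n)]
  have := card_filter_eq_midRight_le hA
  have := card_filter_ne_midRight_le hA
  simp only [ne_eq] at this
  omega

lemma card_rowAntichain {f : Fin m ↪o (Fin (2 * n + 1))ᵒᵈ}
    (hf : toDual (rank (midRight n)) ∈ Set.range f) : #(rowAntichain f) = m + 1 := by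
  obtain ⟨v₀, hv₀⟩ := hf
  refine le_antisymm (card_le_of_isAntichain (isAntichain_rowAntichain f)) ?_
  set S := univ.image fun v => (v, unrank (ofDual (f v)))
  have hnot : (v₀, midRight n) ∉ S := by simp [S, unrank_ne_midRight]
  have hsub : insert (v₀, midRight n) S ⊆ rowAntichain f := by
    simp [S, insert_subset_iff, image_subset_iff, mem_rowAntichain, hv₀]
  calc m + 1 = #(insert (v₀, midRight n) S) := by
        rw [card_insert_of_notMem hnot, card_image_of_injective _ fun v w h => congrArg Prod.fst h,
          card_univ, Fintype.card_fin]
    _ ≤ #(rowAntichain f) := card_le_card hsub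

lemma rowAntichain_injective :
    Function.Injective
      (rowAntichain : (Fin m ↪o (Fin (2 * n + 1))ᵒᵈ) → Finset (Fin m × K n)) := by
  intro f g h
  ext1 v
  have : (v, unrank (ofDual (f v))) ∈ rowAntichain g := h ▸ mem_rowAntichain.2 (by simp)
  simpa [mem_rowAntichain] using this

section Maximal

variable {A : Finset (Fin m × K n)} (hA : IsAntichain (· ≤ ·) (A : Set (Fin m × K n)))
  (hcard : #A = m + 1)
include hA hcard

lemma card_filter_midRight_of_card_eq :
    #{p ∈ A | p.2 ≠ midRight n} = m ∧ #{p ∈ A | p.2 = midRight n} = 1 := by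
  have := card_filter_add_card_filter_not (s := A) (·.2 = midRight n)
  have := card_filter_eq_midRight_le hA
  have := card_filter_ne_midRight_le hA
  simp only [ne_eq] at *
  omega

lemma exists_mem_ne_midRight_of_card_eq (v : Fin m) : ∃ k ≠ midRight n, (v, k) ∈ A := by
  have hfst : {p ∈ A | p.2 ≠ midRight n}.image Prod.fst = univ :=
    eq_of_subset_of_card_le (subset_univ _) <| by
      rw [card_image_of_injOn (injOn_fst_filter_ne_midRight hA),
        (card_filter_midRight_of_card_eq hA hcard).1, card_univ, Fintype.card_fin]
  obtain ⟨p, hp, rfl⟩ := mem_image.1 (hfst ▸ mem_univ v)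
  rw [mem_filter] at hp
  exact ⟨p.2, hp.2, hp.1⟩

lemma exists_mem_midRight_of_card_eq : ∃ v, (v, midRight n) ∈ A := by
  obtain ⟨p, hp⟩ := card_pos.1 ((card_filter_midRight_of_card_eq hA hcard).2 ▸ Nat.one_pos)
  rw [mem_filter] at hp
  exact ⟨p.1, hp.2 ▸ hp.1⟩

lemma exists_rowAntichain_eq :
    ∃ f : Fin m ↪o (Fin (2 * n + 1))ᵒᵈ,
      toDual (rank (midRight n)) ∈ Set.range f ∧ rowAntichain f = A := by
  choose g hg hgA using exists_mem_ne_midRight_of_card_eq hA hcard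
  obtain ⟨v₀, hv₀⟩ := exists_mem_midRight_of_card_eq hA hcard
  have hanti : StrictAnti (rank ∘ g) := fun v w hvw => by
    have h := hA.not_snd_le_of_fst_lt (hgA v) (hgA w) hvw
    rw [le_iff_rank_lt_or_eq, not_or, not_lt] at h
    exact h.1.lt_of_ne fun he => h.2 (rank_injOn (hg v) (hg w) he.symm)
  have hmid : rank (g v₀) = rank (midRight n) := by
    have hne : (v₀, g v₀) ≠ (v₀, midRight n) := fun h => hg v₀ (congrArg Prod.snd h)
    have h₁ : ¬ g v₀ ≤ midRight n := fun h => hA (hgA v₀) hv₀ hne ⟨le_rfl, h⟩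
    have h₂ : ¬ midRight n ≤ g v₀ := fun h => hA hv₀ (hgA v₀) hne.symm ⟨le_rfl, h⟩
    rw [le_iff_rank_lt_or_eq, not_or, not_lt] at h₁ h₂
    exact le_antisymm h₂.1 h₁.1
  refine ⟨OrderEmbedding.ofStrictMono _ hanti.dual_right, ⟨v₀, congrArg toDual hmid⟩, ?_⟩
  refine (eq_of_subset_of_card_le (fun p hp => ?_) ?_).symm
  · rw [mem_rowAntichain]
    by_cases hp₂ : p.2 = midRight n
    · obtain rfl : p = (v₀, midRight n) := hA.injOn_snd hp hv₀ hp₂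
      exact congrArg toDual hmid.symm
    · have : p = (p.1, g p.1) :=
        hA.injOn_fst_of_isChain isChain_ne_midRight ⟨hp, hp₂⟩ ⟨hgA p.1, hg p.1⟩ rfl
      rw [this]
      rfl
  · rw [hcard]
    exact card_le_of_isAntichain (isAntichain_rowAntichain _)

end Maximal

theorem card_maximal_antichains (m n : ℕ) :
    Nat.card {A : Finset (Fin m × K n) //
        IsAntichain (· ≤ ·) (A : Set (Fin m × K n)) ∧ #A = m + 1} =
      Nat.card {f : Fin m ↪o (Fin (2 * n + 1))ᵒᵈ //
        toDual (rank (midRight n)) ∈ Set.range f} := by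
  refine (Nat.card_eq_of_bijective (fun f => ⟨rowAntichain f.1, isAntichain_rowAntichain _,
    card_rowAntichain f.2⟩) ⟨fun f g h => ?_, fun A => ?_⟩).symm
  · exact Subtype.ext (rowAntichain_injective (congrArg Subtype.val h))
  · obtain ⟨f, hf, hfA⟩ := exists_rowAntichain_eq A.2.1 A.2.2
    exact ⟨⟨f, hf⟩, Subtype.ext hfA⟩

end K

theorem N_poly_chain_K_monic_iff_general (m n : ℕ) :
    Nat.card {A : Finset (Fin m × K n) //
        IsAntichain (· ≤ ·) (A : Set (Fin m × K n)) ∧ A.card = m + 1} = 1 ↔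
      m = 1 ∨ m = 2 * n + 1 := by
  rw [K.card_maximal_antichains, card_orderEmbedding_mem_range,
    card_powersetCard_mem_eq_one_iff, Fintype.card_orderDual, Fintype.card_fin]

/-- The antichain polynomial `𝒩_{[m]×K_n}` is monic in its top degree `m+1` (i.e. there is
exactly one antichain of the maximal size `m+1`) iff `m = 1` or `m = 2n+1`. -/
theorem N_poly_chain_K_monic_iff (m n : ℕ) (hm : 1 ≤ m) (hn : 1 ≤ n) :
    Nat.card {A : Finset (Fin m × K n) //
        IsAntichain (· ≤ ·) (A : Set (Fin m × K n)) ∧ A.card = m + 1} = 1 ↔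
      m = 1 ∨ m = 2 * n + 1 :=
  N_poly_chain_K_monic_iff_general m n
end
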